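/- Let G be a semi-Markovian causal graph with observed variables V, let 𝔸 be a finite collection of subsets of V, and let X and Y be two disjoint subsets of V. The causal effect of X on Y is g-identifiable from (𝔸, G) if and only if Q[Anc_Y(G_{V∖X})] is g-identifiable from (𝔸, G). -/

import Mathlib

open scoped Classical

/-- A semi-Markovian causal graph: a DAG over a finite vertex set partitioned into
observed (`obs`) and unobserved (`unobs`) variables, where every unobserved variable
has no parents and exactly two (distinct, observed) children. -/
structure CausalGraph (ν : Type) [Fintype ν] [DecidableEq ν] where
  obs : Finset ν
  unobs : Finset ν
  disj : Disjoint obs unobs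
  E : ν → ν → Prop
  edge_mem : ∀ x y, E x y → x ∈ obs ∪ unobs ∧ y ∈ obs ∪ unobs
  acyclic : ∀ x, ¬ Relation.TransGen E x x
  unobs_no_parent : ∀ u ∈ unobs, ∀ w, ¬ E w u
  unobs_two_children : ∀ u ∈ unobs,
    ∃ a b, a ≠ b ∧ a ∈ obs ∧ b ∈ obs ∧ (∀ w, E u w ↔ w = a ∨ w = b)

namespace CausalGraph

variable {ν : Type} [Fintype ν] [DecidableEq ν]

def verts (G : CausalGraph ν) : Finset ν := G.obs ∪ G.unobs

/-- A structural equation model over the causal graph `G`: finite nonempty domains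
(encoded as finite sets of naturals), a pmf for each unobserved variable, and a
conditional pmf (given an assignment to the parents) for each observed variable. -/
structure SEM (G : CausalGraph ν) where
  dom : ν → Finset ℕ
  dom_ne : ∀ x, (dom x).Nonempty
  pU : ν → ℕ → ℝ
  pU_nonneg : ∀ u n, 0 ≤ pU u n
  pU_sum : ∀ u ∈ G.unobs, ∑ n ∈ dom u, pU u n = 1
  pO : ν → ℕ → (ν → ℕ) → ℝ
  pO_nonneg : ∀ x n pa, 0 ≤ pO x n pa
  pO_sum : ∀ x ∈ G.obs, ∀ pa : ν → ℕ, ∑ n ∈ dom x, pO x n pa = 1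
  pO_par : ∀ x n (pa pa' : ν → ℕ), (∀ p, G.E p x → pa p = pa' p) → pO x n pa = pO x n pa'

namespace SEM

variable {G : CausalGraph ν}

/-- Full assignments: all variables of `G` get values in their domains
(non-vertices are pinned to `0`). -/
noncomputable def fullAssign (M : SEM G) : Finset (ν → ℕ) :=
  Fintype.piFinset (fun x => if x ∈ G.verts then M.dom x else {0})

/-- Observed assignments `dom(V)`: observed variables get values in their domains
(all other coordinates are pinned to `0`). -/
noncomputable def obsAssign (M : SEM G) : Finset (ν → ℕ) :=
  Fintype.piFinset (fun x => if x ∈ G.obs then M.dom x else {0})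

/-- `Q^M[S](v) = Σ_u Π_{X ∈ S} P(x | pa_G(X)) Π_{U} P(u)`. -/
noncomputable def Q (M : SEM G) (S : Finset ν) (v : ν → ℕ) : ℝ :=
  ∑ w ∈ M.fullAssign.filter (fun w => ∀ x ∈ G.obs, w x = v x),
    (∏ x ∈ S, M.pO x (w x) w) * ∏ u ∈ G.unobs, M.pU u (w u)

/-- The observational distribution `P^M(v) = Q^M[V](v)`. -/
noncomputable def P (M : SEM G) (v : ν → ℕ) : ℝ := M.Q G.obs v

/-- Post-interventional probability `P^M_x(y)`: sum of `Q^M[V∖X]` over all observed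
realizations consistent with `x` on `X` and `y` on `Y`. -/
noncomputable def Px (M : SEM G) (X : Finset ν) (x : ν → ℕ) (Y : Finset ν) (y : ν → ℕ) : ℝ :=
  ∑ v ∈ M.obsAssign.filter (fun v => (∀ i ∈ X, v i = x i) ∧ (∀ i ∈ Y, v i = y i)),
    M.Q (G.obs \ X) v

/-- `M ∈ 𝕄⁺(G)`: strictly positive observational distribution. -/
def positive (M : SEM G) : Prop := ∀ v ∈ M.obsAssign, 0 < M.P v

end SEM

/-- The causal effect of `X` on `Y` is identifiable from `G`. -/
def Identifiable (G : CausalGraph ν) (X Y : Finset ν) : Prop :=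
  ∀ M₁ M₂ : SEM G, M₁.positive → M₂.positive →
    (∀ i ∈ G.obs, M₁.dom i = M₂.dom i) →
    (∀ v ∈ M₁.obsAssign, M₁.P v = M₂.P v) →
    ∀ x y : ν → ℕ, (∀ i ∈ X, x i ∈ M₁.dom i) → (∀ i ∈ Y, y i ∈ M₁.dom i) →
      M₁.Px X x Y y = M₂.Px X x Y y

/-- `Q[S]` is identifiable from `G`. -/
def QIdentifiable (G : CausalGraph ν) (S : Finset ν) : Prop :=
  Identifiable G (G.obs \ S) S

/-- The causal effect of `X` on `Y` is g-identifiable from `(𝔸, G)`. -/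
def GIdentifiable (G : CausalGraph ν) (𝔸 : Finset (Finset ν)) (X Y : Finset ν) : Prop :=
  ∀ M₁ M₂ : SEM G, M₁.positive → M₂.positive →
    (∀ i ∈ G.obs, M₁.dom i = M₂.dom i) →
    (∀ A ∈ 𝔸, ∀ v ∈ M₁.obsAssign, M₁.Q A v = M₂.Q A v) →
    ∀ x y : ν → ℕ, (∀ i ∈ X, x i ∈ M₁.dom i) → (∀ i ∈ Y, y i ∈ M₁.dom i) →
      M₁.Px X x Y y = M₂.Px X x Y y

/-- `Q[S]` is g-identifiable from `(𝔸, G)`. -/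
def QGIdentifiable (G : CausalGraph ν) (𝔸 : Finset (Finset ν)) (S : Finset ν) : Prop :=
  GIdentifiable G 𝔸 (G.obs \ S) S

/-- Bidirected edge of `G_X` between `a` and `b`: distinct members of `X` sharing an
unobserved parent (whose two children then necessarily both lie in `X`). -/
def biEdge (G : CausalGraph ν) (X : Finset ν) (a b : ν) : Prop :=
  a ≠ b ∧ a ∈ X ∧ b ∈ X ∧ ∃ u ∈ G.unobs, G.E u a ∧ G.E u b

/-- `X` is a single c-component of `G`. -/
def SingleC (G : CausalGraph ν) (X : Finset ν) : Prop :=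
  X.Nonempty ∧ ∀ a ∈ X, ∀ b ∈ X, Relation.ReflTransGen (G.biEdge X) a b

/-- The c-components of `S`: connected components of the bidirected part of `G_S`. -/
noncomputable def cComponents (G : CausalGraph ν) (S : Finset ν) : Finset (Finset ν) :=
  S.image (fun a => S.filter (fun b => Relation.ReflTransGen (G.biEdge S) a b))

/-- Directed edge of `G_X` (both endpoints in `X`). -/
def dirEdgeIn (G : CausalGraph ν) (X : Finset ν) (a b : ν) : Prop :=
  a ∈ X ∧ b ∈ X ∧ G.E a b

/-- `Anc_Y(G_X)`: members of `X` having a directed path in `G_X` to some member of `Y`. -/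
noncomputable def ancIn (G : CausalGraph ν) (X Y : Finset ν) : Finset ν :=
  X.filter (fun a => ∃ y ∈ Y, Relation.ReflTransGen (G.dirEdgeIn X) a y)

/-- Unobserved vertices of the induced subgraph `G[A]`: unobserved vertices of `G`
both of whose children lie in `A`. -/
noncomputable def inducedUnobs (G : CausalGraph ν) (A : Finset ν) : Finset ν :=
  G.unobs.filter (fun u => ∀ w, G.E u w → w ∈ A)

/-- The induced subgraph `G[A]`. -/
noncomputable def induced (G : CausalGraph ν) (A : Finset ν) : CausalGraph ν where
  obs := A ∩ G.obs
  unobs := G.inducedUnobs A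
  disj := G.disj.mono Finset.inter_subset_right (Finset.filter_subset _ _)
  E x y := G.E x y ∧ x ∈ (A ∩ G.obs) ∪ G.inducedUnobs A ∧ y ∈ (A ∩ G.obs) ∪ G.inducedUnobs A
  edge_mem := fun x y h => ⟨h.2.1, h.2.2⟩
  acyclic := fun x h => G.acyclic x (Relation.TransGen.mono (by intro a b hab; exact hab.1) x x h)
  unobs_no_parent := fun u hu w hw =>
    G.unobs_no_parent u (Finset.mem_filter.mp hu).1 w hw.1
  unobs_two_children := by
    intro u hu
    have hu' := Finset.mem_filter.mp hu
    obtain ⟨a, b, hab, ha, hb, hiff⟩ := G.unobs_two_children u hu'.1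
    have hEa : G.E u a := (hiff a).mpr (Or.inl rfl)
    have hEb : G.E u b := (hiff b).mpr (Or.inr rfl)
    have haA : a ∈ A := hu'.2 a hEa
    have hbA : b ∈ A := hu'.2 b hEb
    refine ⟨a, b, hab, Finset.mem_inter.mpr ⟨haA, ha⟩, Finset.mem_inter.mpr ⟨hbA, hb⟩, ?_⟩
    intro w
    constructor
    · intro hw; exact (hiff w).mp hw.1
    · rintro (rfl | rfl)
      · exact ⟨hEa, Finset.mem_union.mpr (Or.inr hu),
          Finset.mem_union.mpr (Or.inl (Finset.mem_inter.mpr ⟨haA, ha⟩))⟩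
      · exact ⟨hEb, Finset.mem_union.mpr (Or.inr hu),
          Finset.mem_union.mpr (Or.inl (Finset.mem_inter.mpr ⟨hbA, hb⟩))⟩

/-- `H` is a subgraph of `G`. -/
def IsSubgraph (H G : CausalGraph ν) : Prop :=
  H.obs ⊆ G.obs ∧ H.unobs ⊆ G.unobs ∧ ∀ a b, H.E a b → G.E a b

/-- `H` is an `R`-rooted c-forest: `R` is the root set of `H`, the observed vertex set of
`H` is a single c-component, and every observed vertex has at most one child in `H`. -/
def IsCForest (H : CausalGraph ν) (R : Finset ν) : Prop :=
  H.obs.filter (fun x => ∀ w, ¬ H.E x w) = R ∧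
  H.SingleC H.obs ∧
  ∀ x ∈ H.obs, ∀ w w', H.E x w → H.E x w' → w = w'

end CausalGraph

/-!
The direction `⇐` is Tian's marginalization: `S = Anc_Y(G_{V∖X})` is closed under parents inside
`V∖X`, so summing `Q[V∖X]` over the variables of `(V∖X) ∖ S` gives `Q[S]`, and `P_x(y)` is a sum
of values of `Q[S]`.

For `⇒`, turn a model `M` into a record model `M_ε` in which every `z ∈ S` also carries a record of
the values of its ancestors in `G_S`, copied from the records of its parents with probability
`1 - ε` and uniform otherwise. `Q[A]` of `M_ε` is `Q[A]` of `M` times weights that depend only on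
the observed values, so models agreeing on `𝔸` give record models agreeing on `𝔸`, and `M_ε` is
positive for `0 < ε < 1`. The effect of `X` on `Y` in `M_ε` is polynomial in `ε`. At `ε = 0` all
records are exact, so the records at `Y` determine the values on all of `S` and the effect equals
`Q^M[S]`; continuity in `ε` carries identifiability over to `Q[S]`.
-/

open Finset Relation

theorem Finite.wellFounded_of_acyclic {α : Type*} [Finite α] {r : α → α → Prop}
    (h : ∀ x, ¬ TransGen r x x) : WellFounded r :=
  haveI : IsTrans α (TransGen r) := ⟨fun _ _ _ => TransGen.trans⟩
  haveI : Std.Irrefl (TransGen r) := ⟨h⟩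
  Subrelation.wf TransGen.single (Finite.wellFounded_of_trans_of_irrefl _)

section Coding

variable {ν : Type} [Finite ν]

noncomputable def encodeAssign (g : ν → ℕ) : ℕ :=
  (Encodable.ofCountable (ν → ℕ)).encode g

noncomputable def decodeAssign (m : ℕ) : ν → ℕ :=
  ((Encodable.ofCountable (ν → ℕ)).decode m).getD 0

@[simp]
theorem decodeAssign_encodeAssign (g : ν → ℕ) : decodeAssign (encodeAssign g) = g := by
  simp [encodeAssign, decodeAssign, Encodable.encodek]

theorem encodeAssign_injective : Function.Injective (encodeAssign (ν := ν)) :=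
  Function.LeftInverse.injective decodeAssign_encodeAssign

end Coding

namespace CausalGraph

variable {ν : Type} [Fintype ν] [DecidableEq ν] {G : CausalGraph ν}

theorem notMem_unobs_of_mem_obs {t : ν} (ht : t ∈ G.obs) : t ∉ G.unobs :=
  disjoint_left.mp G.disj ht

theorem wellFounded_E (G : CausalGraph ν) : WellFounded G.E :=
  Finite.wellFounded_of_acyclic G.acyclic

theorem exists_sink (G : CausalGraph ν) {B : Finset ν} (hB : B.Nonempty) :
    ∃ t ∈ B, ∀ c, G.E t c → c ∉ B := by
  have hwf : WellFounded (flip G.E) :=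
    Finite.wellFounded_of_acyclic fun x hx => G.acyclic x (transGen_swap.mp hx)
  obtain ⟨t, ht, hmin⟩ := hwf.has_min (B : Set ν) hB
  exact ⟨t, ht, fun c hc hcB => hmin c hcB hc⟩

def splice (G : CausalGraph ν) (v u : ν → ℕ) : ν → ℕ :=
  fun t => if t ∈ G.unobs then u t else v t

theorem splice_update {t : ν} (ht : t ∈ G.obs) (v u : ν → ℕ) (c : ℕ) :
    G.splice (Function.update v t c) u = Function.update (G.splice v u) t c := by
  funext s
  rcases eq_or_ne s t with rfl | hst
  · simp [splice, notMem_unobs_of_mem_obs ht]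
  · simp [splice, hst]

theorem mem_ancIn {W Y : Finset ν} {z : ν} :
    z ∈ G.ancIn W Y ↔ z ∈ W ∧ ∃ y ∈ Y, ReflTransGen (G.dirEdgeIn W) z y := by
  simp [ancIn]

theorem ancIn_subset (W Y : Finset ν) : G.ancIn W Y ⊆ W := filter_subset _ _

theorem ancIn_sdiff_subset_obs (X Y : Finset ν) : G.ancIn (G.obs \ X) Y ⊆ G.obs :=
  (ancIn_subset _ _).trans sdiff_subset

theorem subset_ancIn {W Y : Finset ν} (hY : Y ⊆ W) : Y ⊆ G.ancIn W Y :=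
  fun y hy => mem_ancIn.mpr ⟨hY hy, y, hy, .refl⟩

theorem mem_ancIn_of_parent {W Y : Finset ν} {p z : ν} (hp : p ∈ W) (hz : z ∈ G.ancIn W Y)
    (hpz : G.E p z) : p ∈ G.ancIn W Y := by
  obtain ⟨hzW, y, hy, hzy⟩ := mem_ancIn.mp hz
  exact mem_ancIn.mpr ⟨hp, y, hy, .head ⟨hp, hzW, hpz⟩ hzy⟩

theorem reflTransGen_dirEdgeIn_ancIn {W Y : Finset ν} {t y : ν} (hy : y ∈ Y)
    (hty : ReflTransGen (G.dirEdgeIn W) t y) :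
    ReflTransGen (G.dirEdgeIn (G.ancIn W Y)) t y := by
  induction hty using ReflTransGen.head_induction_on with
  | refl => exact .refl
  | head hac hcy ih =>
    exact .head ⟨mem_ancIn.mpr ⟨hac.1, y, hy, .head hac hcy⟩,
      mem_ancIn.mpr ⟨hac.2.1, y, hy, hcy⟩, hac.2.2⟩ ih

theorem exists_mem_ancIn_ancIn {W Y : Finset ν} {t : ν} (ht : t ∈ G.ancIn W Y) :
    ∃ y ∈ Y, t ∈ G.ancIn (G.ancIn W Y) {y} := by
  obtain ⟨-, y, hy, hty⟩ := mem_ancIn.mp ht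
  exact ⟨y, hy, mem_ancIn.mpr ⟨ht, y, mem_singleton_self y, reflTransGen_dirEdgeIn_ancIn hy hty⟩⟩

theorem mem_ancIn_singleton {S : Finset ν} {t z : ν} :
    t ∈ G.ancIn S {z} ↔ t ∈ S ∧ ReflTransGen (G.dirEdgeIn S) t z := by
  simp [mem_ancIn]

theorem self_mem_ancIn_singleton {S : Finset ν} {z : ν} (hz : z ∈ S) : z ∈ G.ancIn S {z} :=
  mem_ancIn_singleton.mpr ⟨hz, .refl⟩

/-! ### Marginalization -/

namespace SEM

noncomputable def assignOn (M : SEM G) (T : Finset ν) : Finset (ν → ℕ) :=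
  Fintype.piFinset fun x => if x ∈ T then M.dom x else {0}

theorem mem_assignOn {M : SEM G} {T : Finset ν} {v : ν → ℕ} :
    v ∈ M.assignOn T ↔ (∀ t ∈ T, v t ∈ M.dom t) ∧ ∀ t ∉ T, v t = 0 := by
  simp only [assignOn, Fintype.mem_piFinset]
  refine ⟨fun h => ⟨fun t ht => by simpa [ht] using h t, fun t ht => by simpa [ht] using h t⟩,
    fun ⟨hdom, hzero⟩ t => ?_⟩
  split_ifs with ht
  exacts [hdom t ht, by simp [hzero t ht]]

theorem assignOn_congr {M₁ M₂ : SEM G} {T : Finset ν} (h : ∀ t ∈ T, M₁.dom t = M₂.dom t) :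
    M₁.assignOn T = M₂.assignOn T := by
  ext v
  simp only [mem_assignOn]
  exact and_congr_left' (forall₂_congr fun t ht => by rw [h t ht])

theorem assignOn_nonempty (M : SEM G) (T : Finset ν) : (M.assignOn T).Nonempty := by
  refine Fintype.piFinset_nonempty.mpr fun t => ?_
  split_ifs
  exacts [M.dom_ne t, singleton_nonempty 0]

theorem sum_assignOn_insert (M : SEM G) {T : Finset ν} {z : ν} (hz : z ∉ T)
    (f : (ν → ℕ) → ℝ) :
    ∑ g ∈ M.assignOn (insert z T), f g
      = ∑ a ∈ M.dom z, ∑ r ∈ M.assignOn T, f (Function.update r z a) := by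
  rw [← sum_product']
  refine sum_nbij' (fun g => (g z, Function.update g z 0)) (fun p => Function.update p.2 z p.1)
    ?_ ?_ ?_ ?_ ?_
  · intro g hg
    obtain ⟨hdom, hzero⟩ := mem_assignOn.mp hg
    refine mem_product.mpr ⟨hdom z (mem_insert_self z T), mem_assignOn.mpr
      ⟨fun t ht => ?_, fun t ht => ?_⟩⟩ <;> dsimp only
    · rw [Function.update_of_ne (ne_of_mem_of_not_mem ht hz)]
      exact hdom t (mem_insert_of_mem ht)
    · rcases eq_or_ne t z with rfl | htz
      · simp
      · rw [Function.update_of_ne htz]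
        exact hzero t (by simp [htz, ht])
  · rintro ⟨a, r⟩ hp
    obtain ⟨ha, hr⟩ := mem_product.mp hp
    obtain ⟨hdom, hzero⟩ := mem_assignOn.mp hr
    refine mem_assignOn.mpr ⟨fun t ht => ?_, fun t ht => ?_⟩
    · rcases eq_or_ne t z with rfl | htz
      · simpa using ha
      · rw [Function.update_of_ne htz]
        exact hdom t ((mem_insert.mp ht).resolve_left htz)
    · rw [Function.update_of_ne (fun h : t = z => ht (h ▸ mem_insert_self z T))]
      exact hzero t fun h => ht (mem_insert_of_mem h)
  · intro g _
    simp
  · rintro ⟨a, r⟩ hp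
    simp [← (mem_assignOn.mp (mem_product.mp hp).2).2 z hz]
  · intro g _
    simp

theorem mem_obsAssign {M : SEM G} {v : ν → ℕ} :
    v ∈ M.obsAssign ↔ (∀ t ∈ G.obs, v t ∈ M.dom t) ∧ ∀ t ∉ G.obs, v t = 0 :=
  mem_assignOn

theorem apply_mem_dom {M : SEM G} {v : ν → ℕ} (hv : v ∈ M.obsAssign) {t : ν}
    (ht : t ∈ G.obs) : v t ∈ M.dom t :=
  (mem_obsAssign.mp hv).1 t ht

theorem apply_eq_zero {M : SEM G} {v : ν → ℕ} (hv : v ∈ M.obsAssign) {t : ν}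
    (ht : t ∉ G.obs) : v t = 0 :=
  (mem_obsAssign.mp hv).2 t ht

theorem obsAssign_congr {M₁ M₂ : SEM G} (h : ∀ i ∈ G.obs, M₁.dom i = M₂.dom i) :
    M₁.obsAssign = M₂.obsAssign :=
  assignOn_congr h

theorem update_mem_obsAssign {M : SEM G} {v : ν → ℕ} (hv : v ∈ M.obsAssign) {t : ν}
    (ht : t ∈ G.obs) {c : ℕ} (hc : c ∈ M.dom t) : Function.update v t c ∈ M.obsAssign := by
  refine mem_obsAssign.mpr ⟨fun s hs => ?_, fun s hs => ?_⟩
  · rcases eq_or_ne s t with rfl | hst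
    · simpa using hc
    · simpa [hst] using apply_mem_dom hv hs
  · have hst : s ≠ t := fun h => hs (h ▸ ht)
    simpa [hst] using apply_eq_zero hv hs

theorem splice_restrict_eq {M : SEM G} {v w : ν → ℕ} (hv : v ∈ M.obsAssign)
    (hw : w ∈ M.fullAssign.filter fun w => ∀ x ∈ G.obs, w x = v x) :
    G.splice v (fun t => if t ∈ G.unobs then w t else 0) = w := by
  obtain ⟨hw, hwv⟩ := mem_filter.mp hw
  funext t
  by_cases hu : t ∈ G.unobs
  · simp [splice, hu]
  by_cases ho : t ∈ G.obs
  · simp [splice, hu, hwv t ho]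
  · have hwt : w t = 0 := by simpa [verts, ho, hu] using Fintype.mem_piFinset.mp hw t
    simp [splice, hu, apply_eq_zero hv ho, hwt]

theorem Q_eq_sum_assignOn_unobs (M : SEM G) {T : Finset ν} (hT : T ⊆ G.obs) {v : ν → ℕ}
    (hv : v ∈ M.obsAssign) :
    M.Q T v = ∑ u ∈ M.assignOn G.unobs,
      (∏ z ∈ T, M.pO z (v z) (G.splice v u)) * ∏ w ∈ G.unobs, M.pU w (u w) := by
  refine sum_nbij' (fun w t => if t ∈ G.unobs then w t else 0) (G.splice v) ?_ ?_
    (fun w hw => splice_restrict_eq hv hw) ?_ ?_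
  · intro w hw
    refine Fintype.mem_piFinset.mpr fun t => ?_
    by_cases hu : t ∈ G.unobs
    · simpa [hu, verts] using Fintype.mem_piFinset.mp (mem_filter.mp hw).1 t
    · simp [hu]
  · intro u hu
    refine mem_filter.mpr ⟨Fintype.mem_piFinset.mpr fun t => ?_, fun x hx => ?_⟩
    · by_cases htu : t ∈ G.unobs
      · simpa [splice, htu, verts] using Fintype.mem_piFinset.mp hu t
      by_cases ho : t ∈ G.obs
      · simpa [splice, htu, ho, verts] using apply_mem_dom hv ho
      · simp [splice, htu, ho, verts, apply_eq_zero hv ho]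
    · simp [splice, notMem_unobs_of_mem_obs hx]
  · intro u hu
    funext t
    by_cases htu : t ∈ G.unobs
    · simp [splice, htu]
    · have hut : u t = 0 := by simpa [htu] using Fintype.mem_piFinset.mp hu t
      simp [htu, hut]
  · intro w hw
    rw [splice_restrict_eq hv hw]
    congr 1
    · exact prod_congr rfl fun z hz => by rw [(mem_filter.mp hw).2 z (hT hz)]
    · exact prod_congr rfl fun u hu => by simp [hu]

theorem pO_update_of_not_parent (M : SEM G) {t z : ν} (h : ¬ G.E t z) (n c : ℕ)
    (w : ν → ℕ) : M.pO z n (Function.update w t c) = M.pO z n w :=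
  M.pO_par z n _ _ fun p hp => Function.update_of_ne (fun hpt : p = t => h (hpt ▸ hp)) _ _

theorem sum_Q_update_of_no_child (M : SEM G) {T : Finset ν} (hT : T ⊆ G.obs) {t : ν}
    (htT : t ∈ T) (hnc : ∀ z ∈ T, ¬ G.E t z) {v : ν → ℕ} (hv : v ∈ M.obsAssign) :
    ∑ c ∈ M.dom t, M.Q T (Function.update v t c) = M.Q (T.erase t) v := by
  have ht := hT htT
  have hfactor : ∀ c u, ∏ z ∈ T, M.pO z (Function.update v t c z)
        (G.splice (Function.update v t c) u)
      = M.pO t c (G.splice v u) * ∏ z ∈ T.erase t, M.pO z (v z) (G.splice v u) := by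
    intro c u
    rw [← mul_prod_erase _ _ htT, splice_update ht, Function.update_self,
      pO_update_of_not_parent M (fun h => G.acyclic t (.single h))]
    congr 1
    refine prod_congr rfl fun z hz => ?_
    rw [Function.update_of_ne (ne_of_mem_erase hz),
      pO_update_of_not_parent M (hnc z (mem_of_mem_erase hz))]
  calc ∑ c ∈ M.dom t, M.Q T (Function.update v t c)
      = ∑ u ∈ M.assignOn G.unobs, (∑ c ∈ M.dom t, M.pO t c (G.splice v u)) *
          ((∏ z ∈ T.erase t, M.pO z (v z) (G.splice v u)) * ∏ w ∈ G.unobs, M.pU w (u w)) := by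
        simp_rw [sum_mul]
        rw [sum_comm]
        refine sum_congr rfl fun c hc => ?_
        rw [Q_eq_sum_assignOn_unobs M hT (update_mem_obsAssign hv ht hc)]
        simp only [hfactor, mul_assoc]
    _ = M.Q (T.erase t) v := by
        rw [Q_eq_sum_assignOn_unobs M ((erase_subset t T).trans hT) hv]
        simp only [M.pO_sum t ht, one_mul]

noncomputable def fiber (M : SEM G) (D : Finset ν) (v₀ : ν → ℕ) : Finset (ν → ℕ) :=
  M.obsAssign.filter fun v => ∀ s ∉ D, v s = v₀ s

theorem sum_fiber_insert (M : SEM G) {D : Finset ν} {t : ν} (ht : t ∈ G.obs) (htD : t ∉ D)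
    {v₀ : ν → ℕ} (hv₀ : v₀ ∈ M.obsAssign) (f : (ν → ℕ) → ℝ) :
    ∑ v ∈ M.fiber (insert t D) v₀, f v
      = ∑ v ∈ M.fiber D v₀, ∑ c ∈ M.dom t, f (Function.update v t c) := by
  rw [← sum_product']
  refine sum_nbij' (fun v => (Function.update v t (v₀ t), v t))
    (fun p => Function.update p.1 t p.2) ?_ ?_ ?_ ?_ ?_
  · intro v hv
    simp only [fiber, mem_filter, mem_product] at hv ⊢
    refine ⟨⟨update_mem_obsAssign hv.1 ht (apply_mem_dom hv₀ ht), fun s hs => ?_⟩,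
      apply_mem_dom hv.1 ht⟩
    rcases eq_or_ne s t with rfl | hst
    · simp
    · simpa [hst] using hv.2 s (by simp [hst, hs])
  · rintro ⟨v, c⟩ hp
    simp only [fiber, mem_filter, mem_product] at hp ⊢
    refine ⟨update_mem_obsAssign hp.1.1 ht hp.2, fun s hs => ?_⟩
    rw [mem_insert, not_or] at hs
    simpa [hs.1] using hp.1.2 s hs.2
  · intro v _
    simp
  · rintro ⟨v, c⟩ hp
    simp only [fiber, mem_filter, mem_product] at hp
    simp [← hp.1.2 t htD]
  · intro v _
    simp

/-- Tian's lemma. -/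
theorem sum_fiber_Q (M : SEM G) {A T : Finset ν} (hAT : A ⊆ T) (hT : T ⊆ G.obs)
    (hA : ∀ p ∈ T, ∀ z ∈ A, G.E p z → p ∈ A) {v₀ : ν → ℕ} (hv₀ : v₀ ∈ M.obsAssign) :
    ∑ v ∈ M.fiber (T \ A) v₀, M.Q T v = M.Q A v₀ := by
  induction hn : (T \ A).card generalizing T with
  | zero =>
    obtain rfl : T = A := hAT.antisymm' (sdiff_eq_empty_iff_subset.mp (card_eq_zero.mp hn))
    have hfiber : M.fiber (T \ T) v₀ = {v₀} := by
      ext v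
      simp only [fiber, mem_filter, mem_singleton, sdiff_self, bot_eq_empty, notMem_empty,
        not_false_eq_true, forall_const]
      exact ⟨fun h => funext h.2, by rintro rfl; exact ⟨hv₀, fun _ => rfl⟩⟩
    rw [hfiber, sum_singleton]
  | succ n ih =>
    obtain ⟨t, htTA, hsink⟩ := G.exists_sink (card_pos.mp (by rw [hn]; exact n.succ_pos))
    obtain ⟨htT, htA⟩ := mem_sdiff.mp htTA
    have hnc : ∀ z ∈ T, ¬ G.E t z := fun z hz hE => by
      by_cases hzA : z ∈ A
      · exact htA (hA t htT z hzA hE)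
      · exact hsink z hE (mem_sdiff.mpr ⟨hz, hzA⟩)
    have hsplit : T \ A = insert t (T.erase t \ A) := by
      rw [erase_sdiff_comm, insert_erase htTA]
    have hAT' : A ⊆ T.erase t := fun a ha => mem_erase.mpr ⟨fun h => htA (h ▸ ha), hAT ha⟩
    rw [hsplit, sum_fiber_insert M (hT htT) (by simp) hv₀]
    calc ∑ v ∈ M.fiber (T.erase t \ A) v₀, ∑ c ∈ M.dom t, M.Q T (Function.update v t c)
        = ∑ v ∈ M.fiber (T.erase t \ A) v₀, M.Q (T.erase t) v :=
          sum_congr rfl fun v hv =>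
            sum_Q_update_of_no_child M hT htT hnc (mem_filter.mp hv).1
      _ = M.Q A v₀ :=
          ih hAT' ((erase_subset t T).trans hT)
            (fun p hp => hA p (mem_of_mem_erase hp))
            (by rw [erase_sdiff_comm, card_erase_of_mem htTA, hn, Nat.add_sub_cancel])

theorem Px_compl_eq_Q (M : SEM G) {S : Finset ν} (hS : S ⊆ G.obs) {x y v : ν → ℕ}
    (hv : v ∈ M.obsAssign) (hvx : ∀ i ∈ G.obs \ S, v i = x i) (hvy : ∀ i ∈ S, v i = y i) :
    M.Px (G.obs \ S) x S y = M.Q S v := by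
  have hunique : M.obsAssign.filter
      (fun v' => (∀ i ∈ G.obs \ S, v' i = x i) ∧ ∀ i ∈ S, v' i = y i) = {v} := by
    refine eq_singleton_iff_unique_mem.mpr ⟨mem_filter.mpr ⟨hv, hvx, hvy⟩, fun v' hv' => ?_⟩
    obtain ⟨hv'o, hv'x, hv'y⟩ := mem_filter.mp hv'
    funext i
    by_cases hio : i ∈ G.obs
    · by_cases hiS : i ∈ S
      · rw [hv'y i hiS, hvy i hiS]
      · rw [hv'x i (mem_sdiff.mpr ⟨hio, hiS⟩), hvx i (mem_sdiff.mpr ⟨hio, hiS⟩)]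
    · rw [apply_eq_zero hv'o hio, apply_eq_zero hv hio]
  rw [Px, hunique, sum_singleton, Finset.sdiff_sdiff_eq_self hS]

theorem exists_mem_obsAssign_eq (M : SEM G) {S : Finset ν} (hS : S ⊆ G.obs) {x y : ν → ℕ}
    (hx : ∀ i ∈ G.obs \ S, x i ∈ M.dom i) (hy : ∀ i ∈ S, y i ∈ M.dom i) :
    ∃ v ∈ M.obsAssign, (∀ i ∈ G.obs \ S, v i = x i) ∧ ∀ i ∈ S, v i = y i := by
  have hvx : ∀ i ∈ G.obs \ S, G.obs.piecewise (S.piecewise y x) 0 i = x i := fun i hi => by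
    simp [(mem_sdiff.mp hi).1, (mem_sdiff.mp hi).2]
  have hvy : ∀ i ∈ S, G.obs.piecewise (S.piecewise y x) 0 i = y i := fun i hi => by
    simp [hS hi, hi]
  refine ⟨_, mem_obsAssign.mpr ⟨fun t ht => ?_, fun t ht => by simp [ht]⟩, hvx, hvy⟩
  by_cases htS : t ∈ S
  · exact hvy t htS ▸ hy t htS
  · exact hvx t (mem_sdiff.mpr ⟨ht, htS⟩) ▸ hx t (mem_sdiff.mpr ⟨ht, htS⟩)

/-- `c` only selects a representative in each fiber of the marginalization over
`(V∖X) ∖ Anc_Y(G_{V∖X})`. -/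
theorem Px_eq_sum_Q_ancIn (M : SEM G) {X Y : Finset ν} (hY : Y ⊆ G.obs \ X)
    (x y c : ν → ℕ) (hc : ∀ t ∈ G.obs, c t ∈ M.dom t) :
    M.Px X x Y y = ∑ v₀ ∈ M.obsAssign.filter (fun v =>
        ((∀ i ∈ X, v i = x i) ∧ ∀ i ∈ Y, v i = y i) ∧
          ∀ t ∈ (G.obs \ X) \ G.ancIn (G.obs \ X) Y, v t = c t),
      M.Q (G.ancIn (G.obs \ X) Y) v₀ := by
  set W := G.obs \ X
  set S := G.ancIn W Y
  have hSW : S ⊆ W := ancIn_subset W Y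
  have hYS : Y ⊆ S := subset_ancIn hY
  have hXD : ∀ i ∈ X, i ∉ W \ S := fun i hi h => (mem_sdiff.mp (mem_sdiff.mp h).1).2 hi
  have hYD : ∀ i ∈ Y, i ∉ W \ S := fun i hi h => (mem_sdiff.mp h).2 (hYS hi)
  rw [Px, ← sum_fiberwise_of_maps_to (g := fun v => (W \ S).piecewise c v)
    (t := M.obsAssign.filter fun v =>
      ((∀ i ∈ X, v i = x i) ∧ ∀ i ∈ Y, v i = y i) ∧ ∀ t ∈ W \ S, v t = c t) ?_]
  · refine sum_congr rfl fun v₀ hv₀ => ?_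
    obtain ⟨hv₀o, ⟨hv₀x, hv₀y⟩, hv₀c⟩ := mem_filter.mp hv₀
    rw [← sum_fiber_Q M hSW sdiff_subset (fun p hp z hz => mem_ancIn_of_parent hp hz) hv₀o]
    refine sum_congr (ext fun v => ?_) fun _ _ => rfl
    simp only [fiber, mem_filter]
    constructor
    · rintro ⟨⟨hvo, -⟩, rfl⟩
      exact ⟨hvo, fun s hs => (piecewise_eq_of_notMem _ _ _ hs).symm⟩
    · rintro ⟨hvo, hvv₀⟩
      refine ⟨⟨hvo, fun i hi => ?_, fun i hi => ?_⟩, funext fun s => ?_⟩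
      · rw [hvv₀ i (hXD i hi), hv₀x i hi]
      · rw [hvv₀ i (hYD i hi), hv₀y i hi]
      · by_cases hs : s ∈ W \ S
        · rw [piecewise_eq_of_mem _ _ _ hs, hv₀c s hs]
        · rw [piecewise_eq_of_notMem _ _ _ hs, hvv₀ s hs]
  · intro v hv
    obtain ⟨hvo, hvx, hvy⟩ := mem_filter.mp hv
    refine mem_filter.mpr ⟨mem_obsAssign.mpr ⟨fun t ht => ?_, fun t ht => ?_⟩,
      ⟨fun i hi => ?_, fun i hi => ?_⟩, fun t ht => piecewise_eq_of_mem _ _ _ ht⟩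
    · by_cases htD : t ∈ W \ S
      · rw [piecewise_eq_of_mem _ _ _ htD]; exact hc t ht
      · rw [piecewise_eq_of_notMem _ _ _ htD]; exact apply_mem_dom hvo ht
    · rw [piecewise_eq_of_notMem _ _ _ fun h => ht (mem_sdiff.mp (mem_sdiff.mp h).1).1]
      exact apply_eq_zero hvo ht
    · rw [piecewise_eq_of_notMem _ _ _ (hXD i hi), hvx i hi]
    · rw [piecewise_eq_of_notMem _ _ _ (hYD i hi), hvy i hi]

end SEM

theorem QGIdentifiable.gIdentifiable {𝔸 : Finset (Finset ν)} {X Y : Finset ν}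
    (h : G.QGIdentifiable 𝔸 (G.ancIn (G.obs \ X) Y)) (hY : Y ⊆ G.obs \ X) :
    G.GIdentifiable 𝔸 X Y := by
  intro M₁ M₂ pos₁ pos₂ hdom hQ x y _ _
  have hS := G.ancIn_sdiff_subset_obs X Y
  have hc₁ : ∀ t ∈ G.obs, (M₁.dom_ne t).choose ∈ M₁.dom t :=
    fun t _ => (M₁.dom_ne t).choose_spec
  have hc₂ : ∀ t ∈ G.obs, (M₁.dom_ne t).choose ∈ M₂.dom t :=
    fun t ht => hdom t ht ▸ hc₁ t ht
  rw [M₁.Px_eq_sum_Q_ancIn hY x y _ hc₁, M₂.Px_eq_sum_Q_ancIn hY x y _ hc₂,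
    ← SEM.obsAssign_congr hdom]
  refine sum_congr rfl fun v hv => ?_
  have hv₁ := (mem_filter.mp hv).1
  have hv₂ : v ∈ M₂.obsAssign := SEM.obsAssign_congr hdom ▸ hv₁
  have hdom₁ : ∀ i ∈ G.obs, v i ∈ M₁.dom i := fun i hi => SEM.apply_mem_dom hv₁ hi
  have hPx := h M₁ M₂ pos₁ pos₂ hdom hQ v v (fun i hi => hdom₁ i (mem_sdiff.mp hi).1)
    (fun i hi => hdom₁ i (hS hi))
  rwa [M₁.Px_compl_eq_Q hS hv₁ (fun _ _ => rfl) (fun _ _ => rfl),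
    M₂.Px_compl_eq_Q hS hv₂ (fun _ _ => rfl) (fun _ _ => rfl)] at hPx

/-! ### Record models -/

noncomputable def strictAncIn (G : CausalGraph ν) (S : Finset ν) (z : ν) : Finset ν :=
  (G.ancIn S {z}).erase z

theorem strictAncIn_subset (S : Finset ν) (z : ν) : G.strictAncIn S z ⊆ S :=
  (erase_subset z _).trans (ancIn_subset S {z})

theorem self_notMem_strictAncIn (S : Finset ν) (z : ν) : z ∉ G.strictAncIn S z :=
  notMem_erase z _

noncomputable def parentToward (G : CausalGraph ν) (S : Finset ν) (z t : ν) : ν :=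
  if h : ∃ p, G.dirEdgeIn S p z ∧ t ∈ G.ancIn S {p} then h.choose else z

theorem parentToward_spec {S : Finset ν} {z t : ν} (ht : t ∈ G.strictAncIn S z) :
    G.dirEdgeIn S (G.parentToward S z t) z ∧ t ∈ G.ancIn S {G.parentToward S z t} := by
  obtain ⟨htz, ht⟩ := mem_erase.mp ht
  obtain ⟨htS, htz'⟩ := mem_ancIn_singleton.mp ht
  have h : ∃ p, G.dirEdgeIn S p z ∧ t ∈ G.ancIn S {p} := by
    rcases ReflTransGen.cases_tail htz' with rfl | ⟨p, htp, hpz⟩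
    · exact absurd rfl htz
    · exact ⟨p, hpz, mem_ancIn_singleton.mpr ⟨htS, htp⟩⟩
  rw [parentToward, dif_pos h]
  exact h.choose_spec

noncomputable def inheritedRecord (G : CausalGraph ν) (S : Finset ν) (z : ν) (pa : ν → ℕ) :
    ν → ℕ :=
  fun t => if t ∈ G.strictAncIn S z then decodeAssign (pa (G.parentToward S z t)) t else 0

theorem inheritedRecord_congr {S : Finset ν} {z : ν} {pa pa' : ν → ℕ}
    (h : ∀ p, G.E p z → pa p = pa' p) :
    G.inheritedRecord S z pa = G.inheritedRecord S z pa' := by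
  funext t
  unfold inheritedRecord
  split_ifs with ht
  · rw [h _ (parentToward_spec ht).1.2.2]
  · rfl

noncomputable def recordPart (z : ν) (m : ℕ) : ν → ℕ := Function.update (decodeAssign m) z 0

noncomputable def decodeOn (S : Finset ν) (v : ν → ℕ) : ν → ℕ :=
  fun t => if t ∈ S then decodeAssign (v t) t else v t

noncomputable def encodeOn (G : CausalGraph ν) (S : Finset ν) (v : ν → ℕ) : ν → ℕ :=
  fun t => if t ∈ S then encodeAssign ((G.ancIn S {t} : Set ν).indicator v) else v t

@[simp]
theorem decodeOn_encodeOn (S : Finset ν) (v : ν → ℕ) : decodeOn S (G.encodeOn S v) = v := by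
  funext t
  by_cases ht : t ∈ S
  · simp [decodeOn, encodeOn, ht, self_mem_ancIn_singleton ht]
  · simp [decodeOn, encodeOn, ht]

theorem encodeOn_congr {S : Finset ν} {v w : ν → ℕ} (h : ∀ t ∈ S, v t = w t) {z : ν}
    (hz : z ∈ S) : G.encodeOn S v z = G.encodeOn S w z := by
  simp only [encodeOn, if_pos hz]
  congr 1
  exact Set.indicator_congr fun t ht => h t (ancIn_subset S {z} ht)

def RecordsExact (G : CausalGraph ν) (S : Finset ν) (v' : ν → ℕ) : Prop :=
  ∀ z ∈ S, recordPart z (v' z) = G.inheritedRecord S z v'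

theorem decodeOn_splice {S : Finset ν} (hS : S ⊆ G.obs) (v u : ν → ℕ) :
    decodeOn S (G.splice v u) = G.splice (decodeOn S v) u := by
  funext t
  by_cases htS : t ∈ S
  · simp [decodeOn, splice, htS, notMem_unobs_of_mem_obs (hS htS)]
  · simp [decodeOn, splice, htS]

theorem inheritedRecord_splice {S : Finset ν} (hS : S ⊆ G.obs) (z : ν) (v u : ν → ℕ) :
    G.inheritedRecord S z (G.splice v u) = G.inheritedRecord S z v := by
  funext t
  unfold inheritedRecord
  split_ifs with ht
  · rw [splice, if_neg (notMem_unobs_of_mem_obs (hS (parentToward_spec ht).1.1))]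
  · rfl

namespace SEM

noncomputable def recordDom (M : SEM G) (S : Finset ν) (z : ν) : Finset ℕ :=
  (M.assignOn (G.ancIn S {z})).image encodeAssign

/-- With probability `1 - e` the record of `z` is copied from its parents, otherwise it is
uniform; the second branch only keeps the weights normalized when the parents' codes lie
outside the domains. -/
noncomputable def recordWeight (M : SEM G) (S : Finset ν) (e : ℝ) (z : ν) (pa r : ν → ℕ) : ℝ :=
  if G.inheritedRecord S z pa ∈ M.assignOn (G.strictAncIn S z) then
    (1 - e) * (if r = G.inheritedRecord S z pa then 1 else 0)
      + e / #(M.assignOn (G.strictAncIn S z))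
  else 1 / #(M.assignOn (G.strictAncIn S z))

theorem card_assignOn_pos (M : SEM G) (T : Finset ν) : (0 : ℝ) < #(M.assignOn T) := by
  exact_mod_cast (M.assignOn_nonempty T).card_pos

theorem recordWeight_nonneg (M : SEM G) (S : Finset ν) {e : ℝ} (he₀ : 0 ≤ e) (he₁ : e ≤ 1)
    (z : ν) (pa r : ν → ℕ) : 0 ≤ M.recordWeight S e z pa r := by
  have := M.card_assignOn_pos (G.strictAncIn S z)
  unfold recordWeight
  split_ifs <;> positivity

theorem sum_recordWeight (M : SEM G) (S : Finset ν) (e : ℝ) (z : ν) (pa : ν → ℕ) :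
    ∑ r ∈ M.assignOn (G.strictAncIn S z), M.recordWeight S e z pa r = 1 := by
  have hcard := (M.card_assignOn_pos (G.strictAncIn S z)).ne'
  unfold recordWeight
  split_ifs with h
  · rw [sum_add_distrib, ← mul_sum, sum_ite_eq', if_pos h, sum_const, nsmul_eq_mul]
    field_simp
    ring
  · rw [sum_const, nsmul_eq_mul]
    field_simp

theorem recordWeight_congr_parents (M : SEM G) (S : Finset ν) (e : ℝ) {z : ν}
    {pa pa' : ν → ℕ} (h : ∀ p, G.E p z → pa p = pa' p) (r : ν → ℕ) :
    M.recordWeight S e z pa r = M.recordWeight S e z pa' r := by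
  rw [recordWeight, recordWeight, inheritedRecord_congr h]

theorem continuous_recordWeight (M : SEM G) (S : Finset ν) (z : ν) (pa r : ν → ℕ) :
    Continuous fun e => M.recordWeight S e z pa r := by
  unfold recordWeight
  split_ifs <;> fun_prop

theorem sum_recordDom (M : SEM G) {S : Finset ν} {z : ν} (hz : z ∈ S) (f : ℕ → ℝ)
    (g : (ν → ℕ) → ℝ) :
    ∑ m ∈ M.recordDom S z, f (decodeAssign m z) * g (recordPart z m)
      = (∑ a ∈ M.dom z, f a) * ∑ r ∈ M.assignOn (G.strictAncIn S z), g r := by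
  have hanc : G.ancIn S {z} = insert z (G.strictAncIn S z) :=
    (insert_erase (self_mem_ancIn_singleton hz)).symm
  rw [recordDom, sum_image fun _ _ _ _ h => encodeAssign_injective h, hanc,
    sum_assignOn_insert M (self_notMem_strictAncIn S z), sum_mul_sum]
  refine sum_congr rfl fun a _ => sum_congr rfl fun r hr => ?_
  have hrz : r z = 0 := (mem_assignOn.mp hr).2 z (self_notMem_strictAncIn S z)
  simp [recordPart, ← hrz]

/-- The value of `z ∈ S` codes an assignment to the ancestors of `z` in `G_S`; its entry at `z`
follows the mechanism of `M` and the other entries copy the records of the parents of `z`, up to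
noise of size `ε`. -/
noncomputable def recordModel (M : SEM G) (S : Finset ν) (hS : S ⊆ G.obs) (ε : unitInterval) :
    SEM G where
  dom z := if z ∈ S then M.recordDom S z else M.dom z
  dom_ne z := by
    split_ifs
    exacts [(M.assignOn_nonempty _).image _, M.dom_ne z]
  pU := M.pU
  pU_nonneg := M.pU_nonneg
  pU_sum u hu := by
    have huS : u ∉ S := fun h => notMem_unobs_of_mem_obs (hS h) hu
    simpa [huS] using M.pU_sum u hu
  pO z m pa :=
    if z ∈ S then
      M.pO z (decodeAssign m z) (decodeOn S pa) * M.recordWeight S ε z pa (recordPart z m)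
    else M.pO z m (decodeOn S pa)
  pO_nonneg z m pa := by
    split_ifs
    · exact mul_nonneg (M.pO_nonneg _ _ _)
        (M.recordWeight_nonneg S (unitInterval.nonneg ε) (unitInterval.le_one ε) _ _ _)
    · exact M.pO_nonneg _ _ _
  pO_sum z hz pa := by
    split_ifs with hzS
    · rw [sum_recordDom M hzS (fun a => M.pO z a (decodeOn S pa)), M.pO_sum z hz,
        sum_recordWeight, one_mul]
    · exact M.pO_sum z hz _
  pO_par z m pa pa' h := by
    have hdec : ∀ p, G.E p z → decodeOn S pa p = decodeOn S pa' p := fun p hp => by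
      simp only [decodeOn, h p hp]
    simp only [M.pO_par z _ _ _ hdec, M.recordWeight_congr_parents S _ h]

section RecordModel

variable {S : Finset ν} {M : SEM G} {hS : S ⊆ G.obs} {ε : unitInterval}

theorem recordDom_congr {M₁ M₂ : SEM G} (h : ∀ i ∈ G.obs, M₁.dom i = M₂.dom i)
    (hS : S ⊆ G.obs) (z : ν) : M₁.recordDom S z = M₂.recordDom S z := by
  rw [recordDom, recordDom, assignOn_congr fun t ht => h t (hS (ancIn_subset S {z} ht))]

theorem recordWeight_congr_dom {M₁ M₂ : SEM G} (h : ∀ i ∈ G.obs, M₁.dom i = M₂.dom i)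
    (hS : S ⊆ G.obs) (e : ℝ) (z : ν) (pa r : ν → ℕ) :
    M₁.recordWeight S e z pa r = M₂.recordWeight S e z pa r := by
  rw [recordWeight, recordWeight,
    assignOn_congr fun t ht => h t (hS (strictAncIn_subset S z ht))]

theorem recordModel_dom_congr {M₁ M₂ : SEM G} (h : ∀ i ∈ G.obs, M₁.dom i = M₂.dom i)
    (ε₁ ε₂ : unitInterval) :
    ∀ i ∈ G.obs, (M₁.recordModel S hS ε₁).dom i = (M₂.recordModel S hS ε₂).dom i := by
  intro i hi
  change (if i ∈ S then _ else _) = if i ∈ S then _ else _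
  rw [recordDom_congr h hS, h i hi]

theorem mem_recordDom {v' : ν → ℕ} (hv' : v' ∈ (M.recordModel S hS ε).obsAssign) {z : ν}
    (hz : z ∈ S) : v' z ∈ M.recordDom S z := by
  simpa [recordModel, hz] using apply_mem_dom hv' (hS hz)

theorem decodeAssign_mem_assignOn {z : ν} {m : ℕ} (hm : m ∈ M.recordDom S z) :
    decodeAssign m ∈ M.assignOn (G.ancIn S {z}) := by
  obtain ⟨g, hg, rfl⟩ := mem_image.mp hm
  rwa [decodeAssign_encodeAssign]

theorem encodeAssign_decodeAssign {z : ν} {m : ℕ} (hm : m ∈ M.recordDom S z) :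
    encodeAssign (decodeAssign m : ν → ℕ) = m := by
  obtain ⟨g, -, rfl⟩ := mem_image.mp hm
  rw [decodeAssign_encodeAssign]

theorem decodeAssign_apply_mem_dom {v' : ν → ℕ} (hv' : v' ∈ (M.recordModel S hS ε).obsAssign)
    {z t : ν} (hz : z ∈ S) (ht : t ∈ G.ancIn S {z}) : decodeAssign (v' z) t ∈ M.dom t :=
  (mem_assignOn.mp (decodeAssign_mem_assignOn (mem_recordDom hv' hz))).1 t ht

theorem decodeOn_mem_obsAssign {v' : ν → ℕ} (hv' : v' ∈ (M.recordModel S hS ε).obsAssign) :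
    decodeOn S v' ∈ M.obsAssign := by
  refine mem_obsAssign.mpr ⟨fun t ht => ?_, fun t ht => ?_⟩
  · by_cases htS : t ∈ S
    · simpa [decodeOn, htS] using
        decodeAssign_apply_mem_dom hv' htS (self_mem_ancIn_singleton htS)
    · simpa [decodeOn, htS, recordModel] using apply_mem_dom hv' ht
  · have htS : t ∉ S := fun h => ht (hS h)
    simpa [decodeOn, htS] using apply_eq_zero hv' ht

theorem encodeOn_mem_obsAssign (hS : S ⊆ G.obs) (ε : unitInterval) {v : ν → ℕ}
    (hv : v ∈ M.obsAssign) : G.encodeOn S v ∈ (M.recordModel S hS ε).obsAssign := by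
  refine mem_obsAssign.mpr ⟨fun t ht => ?_, fun t ht => ?_⟩
  · by_cases htS : t ∈ S
    · simp only [encodeOn, recordModel, htS, if_true, recordDom]
      refine mem_image_of_mem _ (mem_assignOn.mpr ⟨fun s hs => ?_, fun s hs => ?_⟩)
      · rw [Set.indicator_of_mem (mem_coe.mpr hs)]
        exact apply_mem_dom hv (hS (ancIn_subset S {t} hs))
      · exact Set.indicator_of_notMem (by simpa using hs) _
    · simpa [encodeOn, recordModel, htS] using apply_mem_dom hv ht
  · have htS : t ∉ S := fun h => ht (hS h)
    simpa [encodeOn, htS] using apply_eq_zero hv ht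

theorem inheritedRecord_mem_assignOn {v' : ν → ℕ}
    (hv' : v' ∈ (M.recordModel S hS ε).obsAssign) (z : ν) :
    G.inheritedRecord S z v' ∈ M.assignOn (G.strictAncIn S z) := by
  refine mem_assignOn.mpr ⟨fun t ht => ?_, fun t ht => by simp [inheritedRecord, ht]⟩
  obtain ⟨⟨hpS, -, -⟩, htp⟩ := parentToward_spec ht
  simpa [inheritedRecord, ht] using decodeAssign_apply_mem_dom hv' hpS htp

theorem Q_recordModel {A : Finset ν} (hA : A ⊆ G.obs) {v' : ν → ℕ}
    (hv' : v' ∈ (M.recordModel S hS ε).obsAssign) :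
    (M.recordModel S hS ε).Q A v'
      = (∏ z ∈ A ∩ S, M.recordWeight S ε z v' (recordPart z (v' z)))
        * M.Q A (decodeOn S v') := by
  have hunobs : (M.recordModel S hS ε).assignOn G.unobs = M.assignOn G.unobs :=
    assignOn_congr fun u hu => if_neg fun h => notMem_unobs_of_mem_obs (hS h) hu
  rw [Q_eq_sum_assignOn_unobs _ hA hv', hunobs,
    Q_eq_sum_assignOn_unobs M hA (decodeOn_mem_obsAssign hv'), mul_sum]
  refine sum_congr rfl fun u _ => ?_
  have hfactor : ∀ z ∈ A, (M.recordModel S hS ε).pO z (v' z) (G.splice v' u)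
      = (if z ∈ S then M.recordWeight S ε z v' (recordPart z (v' z)) else 1)
        * M.pO z (decodeOn S v' z) (G.splice (decodeOn S v') u) := by
    intro z _
    change (if z ∈ S then _ else _) = _
    rw [decodeOn_splice hS]
    by_cases hz : z ∈ S
    · simp only [hz, if_true, decodeOn, recordWeight, inheritedRecord_splice hS]
      ring
    · simp [hz, decodeOn]
  rw [prod_congr rfl hfactor, prod_mul_distrib, prod_ite_mem, mul_assoc]
  rfl

theorem recordModel_positive (hM : M.positive) (hε₀ : 0 < (ε : ℝ)) (hε₁ : (ε : ℝ) < 1) :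
    (M.recordModel S hS ε).positive := by
  intro v' hv'
  rw [P, Q_recordModel subset_rfl hv', inter_eq_right.mpr hS]
  refine mul_pos (prod_pos fun z _ => ?_) (hM _ (decodeOn_mem_obsAssign hv'))
  rw [recordWeight, if_pos (inheritedRecord_mem_assignOn hv' z)]
  have := div_pos hε₀ (M.card_assignOn_pos (G.strictAncIn S z))
  split_ifs <;> nlinarith

theorem recordModel_Q_congr {M₁ M₂ : SEM G} (h : ∀ i ∈ G.obs, M₁.dom i = M₂.dom i)
    {A : Finset ν} (hA : A ⊆ G.obs) (hQ : ∀ v ∈ M₁.obsAssign, M₁.Q A v = M₂.Q A v) :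
    ∀ v' ∈ (M₁.recordModel S hS ε).obsAssign,
      (M₁.recordModel S hS ε).Q A v' = (M₂.recordModel S hS ε).Q A v' := by
  intro v' hv'
  have hv'₂ : v' ∈ (M₂.recordModel S hS ε).obsAssign :=
    obsAssign_congr (recordModel_dom_congr h ε ε) ▸ hv'
  rw [Q_recordModel hA hv', Q_recordModel hA hv'₂, hQ _ (decodeOn_mem_obsAssign hv')]
  simp only [recordWeight_congr_dom h hS]

theorem prod_recordWeight_zero {v' : ν → ℕ} (hv' : v' ∈ (M.recordModel S hS ε).obsAssign) :
    ∏ z ∈ S, M.recordWeight S 0 z v' (recordPart z (v' z))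
      = if G.RecordsExact S v' then 1 else 0 := by
  simp only [recordWeight, inheritedRecord_mem_assignOn hv', if_true, sub_zero, one_mul,
    zero_div, add_zero]
  rw [prod_boole]
  congr

theorem Px_recordModel {X Y : Finset ν} (hSX : S ⊆ G.obs \ X) (x y : ν → ℕ) :
    (M.recordModel S hS ε).Px X x Y y
      = ∑ v' ∈ (M.recordModel S hS ε).obsAssign.filter
          (fun v' => (∀ i ∈ X, v' i = x i) ∧ ∀ i ∈ Y, v' i = y i),
        (∏ z ∈ S, M.recordWeight S ε z v' (recordPart z (v' z)))
          * M.Q (G.obs \ X) (decodeOn S v') := by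
  refine sum_congr rfl fun v' hv' => ?_
  rw [Q_recordModel sdiff_subset (mem_filter.mp hv').1, inter_eq_right.mpr hSX]

end RecordModel

end SEM

/-! ### Exact records -/

theorem recordsExact_of_eq_encodeOn {S : Finset ν} {v v' : ν → ℕ}
    (h : ∀ z ∈ S, v' z = G.encodeOn S v z) : G.RecordsExact S v' := by
  intro z hz
  funext t
  have hcode : ∀ p ∈ S, decodeAssign (v' p) = (G.ancIn S {p} : Set ν).indicator v :=
    fun p hp => by rw [h p hp, encodeOn, if_pos hp, decodeAssign_encodeAssign]
  rw [recordPart, hcode z hz, inheritedRecord]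
  rcases eq_or_ne t z with rfl | htz
  · simp [self_notMem_strictAncIn]
  rw [Function.update_of_ne htz]
  split_ifs with ht
  · obtain ⟨⟨hpS, -, -⟩, htp⟩ := parentToward_spec ht
    rw [hcode _ hpS, Set.indicator_of_mem (mem_coe.mpr htp),
      Set.indicator_of_mem (mem_coe.mpr (mem_of_mem_erase ht))]
  · exact Set.indicator_of_notMem (fun h => ht (mem_erase.mpr ⟨htz, h⟩)) _

theorem decodeAssign_eq_of_recordsExact {S : Finset ν} {v' : ν → ℕ}
    (hex : G.RecordsExact S v') :
    ∀ z ∈ S, ∀ t ∈ G.strictAncIn S z, decodeAssign (v' z) t = decodeAssign (v' t) t := by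
  intro z
  induction z using G.wellFounded_E.induction with
  | _ z ih =>
    intro hz t ht
    obtain ⟨⟨hpS, -, hpz⟩, htp⟩ := parentToward_spec ht
    have hzt : decodeAssign (v' z) t = decodeAssign (v' (G.parentToward S z t)) t := by
      have := congrFun (hex z hz) t
      rwa [recordPart, Function.update_of_ne (mem_erase.mp ht).1, inheritedRecord,
        if_pos ht] at this
    rw [hzt]
    rcases eq_or_ne t (G.parentToward S z t) with hp | hp
    · rw [← hp]
    · exact ih _ hpz hpS t (mem_erase.mpr ⟨hp, htp⟩)

theorem eq_encodeOn_of_recordsExact {S Y : Finset ν} (hYS : Y ⊆ S)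
    (hcover : ∀ t ∈ S, ∃ y ∈ Y, t ∈ G.ancIn S {y}) {M : SEM G} {hS : S ⊆ G.obs}
    {ε : unitInterval} {v v' : ν → ℕ} (hv' : v' ∈ (M.recordModel S hS ε).obsAssign)
    (hex : G.RecordsExact S v') (hY : ∀ y ∈ Y, v' y = G.encodeOn S v y) :
    ∀ z ∈ S, v' z = G.encodeOn S v z := by
  have hdecY : ∀ y ∈ Y, decodeAssign (v' y) = (G.ancIn S {y} : Set ν).indicator v :=
    fun y hy => by rw [hY y hy, encodeOn, if_pos (hYS hy), decodeAssign_encodeAssign]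
  have hown : ∀ t ∈ S, decodeAssign (v' t) t = v t := by
    intro t ht
    obtain ⟨y, hy, hty⟩ := hcover t ht
    rcases eq_or_ne t y with rfl | hty'
    · rw [hdecY t hy, Set.indicator_of_mem (mem_coe.mpr hty)]
    · rw [← decodeAssign_eq_of_recordsExact hex y (hYS hy) t (mem_erase.mpr ⟨hty', hty⟩),
        hdecY y hy, Set.indicator_of_mem (mem_coe.mpr hty)]
  intro z hz
  have hvz := SEM.mem_recordDom hv' hz
  have hdec : decodeAssign (v' z) = (G.ancIn S {z} : Set ν).indicator v := by
    funext t
    by_cases ht : t ∈ G.ancIn S {z}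
    · rw [Set.indicator_of_mem (mem_coe.mpr ht)]
      rcases eq_or_ne t z with rfl | htz
      · exact hown t hz
      · rw [decodeAssign_eq_of_recordsExact hex z hz t (mem_erase.mpr ⟨htz, ht⟩),
          hown t (ancIn_subset S {z} ht)]
    · rw [Set.indicator_of_notMem (by simpa using ht),
        (SEM.mem_assignOn.mp (SEM.decodeAssign_mem_assignOn hvz)).2 t ht]
  rw [← SEM.encodeAssign_decodeAssign hvz, hdec, encodeOn, if_pos hz]

namespace SEM

theorem sum_fiber_recordModel {S D : Finset ν} (hD : Disjoint D S) {M : SEM G}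
    {hS : S ⊆ G.obs} {ε : unitInterval} {v₀ : ν → ℕ} (f : (ν → ℕ) → ℝ) :
    ∑ v' ∈ (M.recordModel S hS ε).fiber D (G.encodeOn S v₀), f (decodeOn S v')
      = ∑ v ∈ M.fiber D v₀, f v := by
  have hSD : ∀ t ∈ S, t ∉ D := fun t ht htD => disjoint_left.mp hD htD ht
  refine sum_nbij' (decodeOn S) (G.encodeOn S) ?_ ?_ ?_ ?_ fun _ _ => rfl
  · intro v' hv'
    obtain ⟨hv'o, hv'D⟩ := mem_filter.mp hv'
    refine mem_filter.mpr ⟨decodeOn_mem_obsAssign hv'o, fun s hs => ?_⟩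
    simpa [decodeOn, hv'D s hs] using congrFun (decodeOn_encodeOn (G := G) S v₀) s
  · intro v hv
    obtain ⟨hvo, hvD⟩ := mem_filter.mp hv
    refine mem_filter.mpr ⟨encodeOn_mem_obsAssign hS ε hvo, fun s hs => ?_⟩
    by_cases hsS : s ∈ S
    · exact encodeOn_congr (fun t ht => hvD t (hSD t ht)) hsS
    · simp [encodeOn, hsS, hvD s hs]
  · intro v' hv'
    obtain ⟨-, hv'D⟩ := mem_filter.mp hv'
    funext t
    by_cases htS : t ∈ S
    · rw [hv'D t (hSD t htS), encodeOn_congr (w := v₀) (fun s hs => ?_) htS]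
      simpa [decodeOn, hs, hv'D s (hSD s hs)] using
        congrFun (decodeOn_encodeOn (G := G) S v₀) s
    · simp [encodeOn, decodeOn, htS]
  · intro v _
    exact decodeOn_encodeOn S v

theorem filter_recordsExact_eq {S X Y : Finset ν} (hYS : Y ⊆ S)
    (hcover : ∀ t ∈ S, ∃ y ∈ Y, t ∈ G.ancIn S {y}) {M : SEM G} {hS : S ⊆ G.obs}
    {ε : unitInterval} {v₀ : ν → ℕ} (hv₀ : v₀ ∈ M.obsAssign) :
    ((M.recordModel S hS ε).obsAssign.filter (fun v' =>
        (∀ i ∈ X, v' i = G.encodeOn S v₀ i) ∧ ∀ i ∈ Y, v' i = G.encodeOn S v₀ i)).filter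
        (G.RecordsExact S)
      = (M.recordModel S hS ε).fiber ((G.obs \ X) \ S) (G.encodeOn S v₀) := by
  have hXS : ∀ i ∈ X, i ∉ (G.obs \ X) \ S :=
    fun i hi h => (mem_sdiff.mp (mem_sdiff.mp h).1).2 hi
  have hSS : ∀ i ∈ S, i ∉ (G.obs \ X) \ S := fun i hi h => (mem_sdiff.mp h).2 hi
  ext v'
  simp only [mem_filter, fiber]
  constructor
  · rintro ⟨⟨hv'o, hv'X, hv'Y⟩, hex⟩
    refine ⟨hv'o, fun s hs => ?_⟩
    by_cases hsS : s ∈ S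
    · exact eq_encodeOn_of_recordsExact hYS hcover hv'o hex hv'Y s hsS
    by_cases hsX : s ∈ X
    · exact hv'X s hsX
    have hso : s ∉ G.obs := fun h => hs (mem_sdiff.mpr ⟨mem_sdiff.mpr ⟨h, hsX⟩, hsS⟩)
    rw [apply_eq_zero hv'o hso, apply_eq_zero (encodeOn_mem_obsAssign hS ε hv₀) hso]
  · rintro ⟨hv'o, hv'⟩
    exact ⟨⟨hv'o, fun i hi => hv' i (hXS i hi), fun i hi => hv' i (hSS i (hYS hi))⟩,
      recordsExact_of_eq_encodeOn fun z hz => hv' z (hSS z hz)⟩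

theorem exists_continuous_Px_recordModel (M : SEM G) {X Y : Finset ν} (hY : Y ⊆ G.obs \ X)
    {v₀ : ν → ℕ} (hv₀ : v₀ ∈ M.obsAssign) :
    ∃ F : ℝ → ℝ, Continuous F ∧ F 0 = M.Q (G.ancIn (G.obs \ X) Y) v₀ ∧ ∀ ε,
      (M.recordModel _ (ancIn_sdiff_subset_obs X Y) ε).Px X
        (G.encodeOn (G.ancIn (G.obs \ X) Y) v₀) Y (G.encodeOn (G.ancIn (G.obs \ X) Y) v₀)
        = F ε := by
  set S := G.ancIn (G.obs \ X) Y
  set M₀ := M.recordModel S (ancIn_sdiff_subset_obs X Y) 0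
  set FP := M₀.obsAssign.filter (fun v' =>
    (∀ i ∈ X, v' i = G.encodeOn S v₀ i) ∧ ∀ i ∈ Y, v' i = G.encodeOn S v₀ i)
  refine ⟨fun e => ∑ v' ∈ FP, (∏ z ∈ S, M.recordWeight S e z v' (recordPart z (v' z)))
      * M.Q (G.obs \ X) (decodeOn S v'), ?_, ?_, fun ε => Px_recordModel (ancIn_subset _ _) _ _⟩
  · exact continuous_finsetSum _ fun v' _ =>
      (continuous_finsetProd _ fun z _ => M.continuous_recordWeight S z _ _).mul continuous_const
  calc ∑ v' ∈ FP, (∏ z ∈ S, M.recordWeight S 0 z v' (recordPart z (v' z)))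
        * M.Q (G.obs \ X) (decodeOn S v')
      = ∑ v' ∈ FP.filter (G.RecordsExact S), M.Q (G.obs \ X) (decodeOn S v') :=
        (sum_congr rfl fun v' hv' => by
          rw [prod_recordWeight_zero (mem_filter.mp hv').1, ite_mul, one_mul, zero_mul]).trans
          (sum_filter _ _).symm
    _ = ∑ v' ∈ M₀.fiber ((G.obs \ X) \ S) (G.encodeOn S v₀),
          M.Q (G.obs \ X) (decodeOn S v') := by
        rw [filter_recordsExact_eq (subset_ancIn hY) (fun _ => exists_mem_ancIn_ancIn) hv₀]
    _ = ∑ v ∈ M.fiber ((G.obs \ X) \ S) v₀, M.Q (G.obs \ X) v :=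
        sum_fiber_recordModel sdiff_disjoint _
    _ = M.Q S v₀ :=
        sum_fiber_Q M (ancIn_subset _ _) sdiff_subset
          (fun p hp z hz => mem_ancIn_of_parent hp hz) hv₀

end SEM

open SEM in
theorem GIdentifiable.qGIdentifiable_ancIn {𝔸 : Finset (Finset ν)} {X Y : Finset ν}
    (h : G.GIdentifiable 𝔸 X Y) (h𝔸 : ∀ A ∈ 𝔸, A ⊆ G.obs) (hX : X ⊆ G.obs)
    (hY : Y ⊆ G.obs \ X) : G.QGIdentifiable 𝔸 (G.ancIn (G.obs \ X) Y) := by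
  intro M₁ M₂ pos₁ pos₂ hdom hQ x y hx hy
  set S := G.ancIn (G.obs \ X) Y
  have hS : S ⊆ G.obs := ancIn_sdiff_subset_obs X Y
  obtain ⟨v₀, hv₀, hv₀x, hv₀y⟩ := M₁.exists_mem_obsAssign_eq hS hx hy
  have hv₀' : v₀ ∈ M₂.obsAssign := obsAssign_congr hdom ▸ hv₀
  rw [M₁.Px_compl_eq_Q hS hv₀ hv₀x hv₀y, M₂.Px_compl_eq_Q hS hv₀' hv₀x hv₀y]
  obtain ⟨F₁, hF₁, hF₁0, hPx₁⟩ := M₁.exists_continuous_Px_recordModel hY hv₀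
  obtain ⟨F₂, hF₂, hF₂0, hPx₂⟩ := M₂.exists_continuous_Px_recordModel hY hv₀'
  -- The record models are positive only for `ε > 0`; continuity carries the equality to `0`.
  have hEq : Set.EqOn F₁ F₂ (Set.Ioo 0 1) := fun e he => by
    let ε : unitInterval := ⟨e, Set.Ioo_subset_Icc_self he⟩
    have hcode := encodeOn_mem_obsAssign hS ε hv₀
    rw [← hPx₁ ε, ← hPx₂ ε]
    exact h _ _ (recordModel_positive pos₁ he.1 he.2) (recordModel_positive pos₂ he.1 he.2)
      (recordModel_dom_congr hdom ε ε)
      (fun A hA => recordModel_Q_congr hdom (h𝔸 A hA) (hQ A hA)) _ _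
      (fun i hi => apply_mem_dom hcode (hX hi))
      (fun i hi => apply_mem_dom hcode (hS (subset_ancIn hY hi)))
  rw [← hF₁0, ← hF₂0]
  exact hEq.closure hF₁ hF₂ (by rw [closure_Ioo zero_ne_one]; exact ⟨le_rfl, zero_le_one⟩)

end CausalGraph

/-- Proposition 3. The causal effect of `X` on `Y` is g-identifiable
from `(𝔸, G)` iff `Q[Anc_Y(G_{V∖X})]` is g-identifiable from `(𝔸, G)`. -/
theorem gid_iff_gid_ancestors
    {ν : Type} [Fintype ν] [DecidableEq ν] (G : CausalGraph ν)
    (𝔸 : Finset (Finset ν)) (h𝔸 : ∀ A ∈ 𝔸, A ⊆ G.obs)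
    (X Y : Finset ν) (hX : X ⊆ G.obs) (hY : Y ⊆ G.obs) (hXY : Disjoint X Y) :
    G.GIdentifiable 𝔸 X Y ↔ G.QGIdentifiable 𝔸 (G.ancIn (G.obs \ X) Y) := by
  have hYW : Y ⊆ G.obs \ X := fun y hy => mem_sdiff.mpr ⟨hY hy, disjoint_right.mp hXY hy⟩
  exact ⟨fun h => h.qGIdentifiable_ancIn h𝔸 hX hYW, fun h => h.gIdentifiable hYW⟩
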